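/- Let x₀ > 0 and y₀ satisfy 0 < y₀ ≤ 1/√x₀. Then for every n, the Newton iterate y_n (defined by y_{i} = (1/2)·y_{i-1}·(3 - x₀·y_{i-1}²)) satisfies 0 < y_n ≤ 1/√x₀, and the sequence (y_n) is monotonically nondecreasing. -/

import Mathlib

/-! With `t = x a²`, one Newton step `a ↦ a' = a (3 - t) / 2` satisfies `a' - a = a (1 - t) / 2`
and `1 - x a'² = (1 - t)² (4 - t) / 4`. Hence the region `0 < a`, `x a² ≤ 1`, which is
`0 < a ≤ 1/√x`, is mapped into itself, and inside it the iteration can only increase. -/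

noncomputable section

open Real

def newtonInvSqrtStep (x a : ℝ) : ℝ := (1 / 2) * a * (3 - x * a ^ 2)

variable {x a : ℝ}

theorem le_one_div_sqrt_iff_mul_sq_le_one (hx : 0 < x) (ha : 0 ≤ a) :
    a ≤ 1 / √x ↔ x * a ^ 2 ≤ 1 := by
  rw [one_div, ← sqrt_inv, le_sqrt ha (inv_nonneg.mpr hx.le), ← one_div, le_div_iff₀ hx,
    mul_comm]

theorem newtonInvSqrtStep_sub_self : newtonInvSqrtStep x a - a = a * (1 - x * a ^ 2) / 2 := by
  unfold newtonInvSqrtStep; ring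

theorem one_sub_mul_sq_newtonInvSqrtStep :
    1 - x * newtonInvSqrtStep x a ^ 2 = (1 - x * a ^ 2) ^ 2 * (4 - x * a ^ 2) / 4 := by
  unfold newtonInvSqrtStep; ring

theorem newtonInvSqrtStep_pos (ha : 0 < a) (h : x * a ^ 2 ≤ 1) : 0 < newtonInvSqrtStep x a := by
  have : 0 < 3 - x * a ^ 2 := by linarith
  unfold newtonInvSqrtStep
  positivity

theorem le_newtonInvSqrtStep (ha : 0 ≤ a) (h : x * a ^ 2 ≤ 1) : a ≤ newtonInvSqrtStep x a := by
  rw [← sub_nonneg, newtonInvSqrtStep_sub_self]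
  have := sub_nonneg.mpr h
  positivity

theorem mul_sq_newtonInvSqrtStep_le_one (h : x * a ^ 2 ≤ 1) :
    x * newtonInvSqrtStep x a ^ 2 ≤ 1 := by
  rw [← sub_nonneg, one_sub_mul_sq_newtonInvSqrtStep]
  have : 0 ≤ 4 - x * a ^ 2 := by linarith
  positivity

end

/-- For Newton's iteration for the inverse square root starting from
`0 < y 0 ≤ 1/√x₀` with `x₀ > 0`: every iterate satisfies `0 < y n ≤ 1/√x₀`,
and the sequence is monotonically nondecreasing. -/
theorem newton_invsqrt_monotone (x₀ : ℝ) (hx : 0 < x₀) (y : ℕ → ℝ)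
    (hy0_pos : 0 < y 0) (hy0_le : y 0 ≤ 1 / Real.sqrt x₀)
    (hrec : ∀ i, y (i + 1) = (1 / 2) * y i * (3 - x₀ * y i ^ 2)) :
    (∀ n, 0 < y n ∧ y n ≤ 1 / Real.sqrt x₀) ∧ Monotone y := by
  have invariant : ∀ n, 0 < y n ∧ x₀ * y n ^ 2 ≤ 1 := by
    intro n
    induction n with
    | zero => exact ⟨hy0_pos, (le_one_div_sqrt_iff_mul_sq_le_one hx hy0_pos.le).mp hy0_le⟩
    | succ k ih =>
      rw [hrec k]
      exact ⟨newtonInvSqrtStep_pos ih.1 ih.2, mul_sq_newtonInvSqrtStep_le_one ih.2⟩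
  refine ⟨fun n => ⟨(invariant n).1,
    (le_one_div_sqrt_iff_mul_sq_le_one hx (invariant n).1.le).mpr (invariant n).2⟩,
    monotone_nat_of_le_succ fun n => ?_⟩
  rw [hrec n]
  exact le_newtonInvSqrtStep (invariant n).1.le (invariant n).2
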